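/- arXiv:1311.4663 — 2 statements merged into one kernel-verified Lean document; each statement's English description precedes it below -/
import Mathlib

section
/- Let d = (46,36,34,21,14,13,12,11,3,2,2) (length 11) and d′ = (44,42,26,23,18,17,7,6,6,4) (length 10). Then the power sums satisfy (s_1(d),s_2(d),s_3(d),s_4(d),s_5(d)) = (194, 5656, 200600, 7790356, 317267984) and (s_1(d′),s_2(d′),s_3(d′),s_4(d′),s_5(d′)) = (193, 5655, 200599, 7790355, 317267983), so that s_k(d) = s_k(d′) + 1 for k = 1,…,5, and the total degrees satisfy D(d) = D(d′) = 340867118592 = 2^9·3^5·7^2·11·13·17·23. -/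
/-- Power sum `s_k(d) = d_1^k + ⋯ + d_r^k` of a multidegree. -/
def powerSum (k : ℕ) (d : List ℕ) : ℕ := (d.map (· ^ k)).sum

/-- Total degree `D(d) = d_1 ⋯ d_r` of a multidegree. -/
def totalDegree (d : List ℕ) : ℕ := d.prod

def dA : List ℕ := [46, 36, 34, 21, 14, 13, 12, 11, 3, 2, 2]
def dB : List ℕ := [44, 42, 26, 23, 18, 17, 7, 6, 6, 4]

theorem stmt0 :
    dA.length = 11 ∧ dB.length = 10 ∧
    (powerSum 1 dA, powerSum 2 dA, powerSum 3 dA, powerSum 4 dA, powerSum 5 dA)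
      = (194, 5656, 200600, 7790356, 317267984) ∧
    (powerSum 1 dB, powerSum 2 dB, powerSum 3 dB, powerSum 4 dB, powerSum 5 dB)
      = (193, 5655, 200599, 7790355, 317267983) ∧
    (∀ k, 1 ≤ k → k ≤ 5 → powerSum k dA = powerSum k dB + 1) ∧
    totalDegree dA = 340867118592 ∧ totalDegree dB = 340867118592 ∧
    (340867118592 : ℕ) = 2 ^ 9 * 3 ^ 5 * 7 ^ 2 * 11 * 13 * 17 * 23 := by
  refine ⟨rfl, rfl, rfl, rfl, ?_, rfl, rfl, rfl⟩
  intro k hk1 hk5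
  interval_cases k <;> rfl
end

section
/- Let d = (46,36,34,21,14,13,12,11,3,2,2) (length r = 11) and d′ = (44,42,26,23,18,17,7,6,6,4) (length r = 10). Then p_1(d) = p_1(d′) = −5639, p_2(d) = p_2(d′) = 19794330, and e_5(d) = e_5(d′) = 340867118592·(−6401091783). -/
/-- First Pontrjagin class `p_1(d) = 6 + r - s_2` of `X_5(d)` (as a multiple of `x^2`). -/
def p1 (d : List ℕ) : ℚ := 6 + (d.length : ℚ) - (powerSum 2 d : ℚ)

/-- Second Pontrjagin class `p_2(d) = ((6 + r - s_2)^2 - (6 + r - s_4))/2` of `X_5(d)`. -/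
def p2 (d : List ℕ) : ℚ :=
  ((6 + (d.length : ℚ) - (powerSum 2 d : ℚ)) ^ 2
    - (6 + (d.length : ℚ) - (powerSum 4 d : ℚ))) / 2

/-- Euler characteristic of the 5-dimensional complete intersection `X_5(d)`. -/
def e5 (d : List ℕ) : ℚ :=
  let r : ℚ := d.length
  let s1 : ℚ := powerSum 1 d
  let s2 : ℚ := powerSum 2 d
  let s3 : ℚ := powerSum 3 d
  let s4 : ℚ := powerSum 4 d
  let s5 : ℚ := powerSum 5 d
  ((totalDegree d : ℚ) / 120) *
    ((6 + r - s1) ^ 5 - 10 * (6 + r - s1) ^ 3 * (6 + r - s2)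
      + 20 * (6 + r - s1) ^ 2 * (6 + r - s3) - 30 * (6 + r - s1) * (6 + r - s4)
      + 15 * (6 + r - s1) * (6 + r - s2) ^ 2 - 20 * (6 + r - s2) * (6 + r - s3)
      + 24 * (6 + r - s5))

theorem p1_congr {d d' : List ℕ}
    (h2 : (d.length : ℚ) - powerSum 2 d = d'.length - powerSum 2 d') : p1 d = p1 d' := by
  simp only [p1, add_sub_assoc, h2]

theorem p2_congr {d d' : List ℕ}
    (h2 : (d.length : ℚ) - powerSum 2 d = d'.length - powerSum 2 d')
    (h4 : (d.length : ℚ) - powerSum 4 d = d'.length - powerSum 4 d') : p2 d = p2 d' := by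
  simp only [p2, add_sub_assoc, h2, h4]

theorem e5_congr {d d' : List ℕ} (hD : totalDegree d = totalDegree d')
    (hs : ∀ k ∈ Finset.Icc 1 5, (d.length : ℚ) - powerSum k d = d'.length - powerSum k d') :
    e5 d = e5 d' := by
  have h k (hk : 1 ≤ k ∧ k ≤ 5) := hs k (Finset.mem_Icc.mpr hk)
  simp only [e5, add_sub_assoc, hD, h 1 (by norm_num), h 2 (by norm_num), h 3 (by norm_num),
    h 4 (by norm_num), h 5 (by norm_num)]

theorem totalDegree_dA : totalDegree dA = totalDegree dB := rfl

theorem powerSum_dA {k : ℕ} (hk : k ∈ Finset.Icc 1 5) : powerSum k dA = powerSum k dB + 1 := by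
  obtain ⟨hk1, hk5⟩ := Finset.mem_Icc.mp hk
  interval_cases k <;> rfl

theorem length_sub_powerSum_dA {k : ℕ} (hk : k ∈ Finset.Icc 1 5) :
    (dA.length : ℚ) - powerSum k dA = dB.length - powerSum k dB := by
  rw [powerSum_dA hk, show dA.length = dB.length + 1 from rfl]
  push_cast
  ring

theorem stmt1 :
    dA.length = 11 ∧ dB.length = 10 ∧
    p1 dA = -5639 ∧ p1 dB = -5639 ∧
    p2 dA = 19794330 ∧ p2 dB = 19794330 ∧
    e5 dA = 340867118592 * (-6401091783) ∧ e5 dB = 340867118592 * (-6401091783) := by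
  have hs k (hk : k ∈ Finset.Icc 1 5) := length_sub_powerSum_dA hk
  have hp1 : p1 dB = -5639 := by norm_num [p1, powerSum, dB]
  have hp2 : p2 dB = 19794330 := by norm_num [p2, powerSum, dB]
  have he5 : e5 dB = 340867118592 * (-6401091783) := by
    norm_num [e5, powerSum, totalDegree, dB]
  refine ⟨rfl, rfl, ?_, hp1, ?_, hp2, ?_, he5⟩
  · rw [p1_congr (hs 2 (by decide)), hp1]
  · rw [p2_congr (hs 2 (by decide)) (hs 4 (by decide)), hp2]
  · rw [e5_congr totalDegree_dA hs, he5]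
end
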